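/- For all λ, λ₀ ∈ ρ(A_B) and every f ∈ Ran(Γ₁ − BΓ₂), the Weyl M-function admits the representation M_B(λ)f = Γ₂( S_{λ₀,B}f + (λ − λ₀)(A_B − λI)^{−1} S_{λ₀,B}f ) (which the paper writes as M_B(λ) = Γ₂(A_B − λ₀)(A_B − λ)^{−1}S_{λ₀,B}). -/
import Mathlib


open scoped InnerProductSpace

variable {H 𝓗 𝓚 : Type*}
  [NormedAddCommGroup H] [InnerProductSpace ℂ H] [CompleteSpace H]
  [NormedAddCommGroup 𝓗] [InnerProductSpace ℂ 𝓗] [CompleteSpace 𝓗]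
  [NormedAddCommGroup 𝓚] [InnerProductSpace ℂ 𝓚] [CompleteSpace 𝓚]

/-- `R` is the (bounded, everywhere defined) inverse of `A_B − λ`, where `A_B` is the
restriction of `T` to `{u ∈ D(T) : Γ₁ u = B (Γ₂ u)}`. -/
def IsResolventAt (dom : Submodule ℂ H) (T : dom →ₗ[ℂ] H)
    (Γ₁ : dom →ₗ[ℂ] 𝓗) (Γ₂ : dom →ₗ[ℂ] 𝓚) (B : 𝓚 →L[ℂ] 𝓗)
    (lam : ℂ) (R : H →L[ℂ] H) : Prop :=
  (∀ h : H, ∃ hm : R h ∈ dom,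
      Γ₁ ⟨R h, hm⟩ = B (Γ₂ ⟨R h, hm⟩) ∧ T ⟨R h, hm⟩ - lam • R h = h) ∧
  (∀ u : dom, Γ₁ u = B (Γ₂ u) → R (T u - lam • (u : H)) = (u : H))

/-- The resolvent set `ρ(A_B)`. -/
def resolventSetB (dom : Submodule ℂ H) (T : dom →ₗ[ℂ] H)
    (Γ₁ : dom →ₗ[ℂ] 𝓗) (Γ₂ : dom →ₗ[ℂ] 𝓚) (B : 𝓚 →L[ℂ] 𝓗) : Set ℂ :=
  {lam | ∃ R : H →L[ℂ] H, IsResolventAt dom T Γ₁ Γ₂ B lam R}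

theorem stmt2 (dom : Submodule ℂ H) (T : dom →ₗ[ℂ] H)
    (Γ₁ : dom →ₗ[ℂ] 𝓗) (Γ₂ : dom →ₗ[ℂ] 𝓚) (B : 𝓚 →L[ℂ] 𝓗)
    (lam lam₀ : ℂ) (R : H →L[ℂ] H)
    (hR : IsResolventAt dom T Γ₁ Γ₂ B lam R)
    (hlam₀ : lam₀ ∈ resolventSetB dom T Γ₁ Γ₂ B)
    (f : 𝓗) (hf : f ∈ Set.range (fun u : dom => Γ₁ u - B (Γ₂ u)))
    -- `u = S_{λ,B} f` (so that `M_B(λ) f = Γ₂ u`) and `u₀ = S_{λ₀,B} f`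
    (u u₀ : dom)
    (hu : T u = lam • (u : H) ∧ Γ₁ u - B (Γ₂ u) = f)
    (hu₀ : T u₀ = lam₀ • (u₀ : H) ∧ Γ₁ u₀ - B (Γ₂ u₀) = f) :
    -- `M_B(λ) f = Γ₂ ( S_{λ₀,B} f + (λ − λ₀)(A_B − λ)⁻¹ S_{λ₀,B} f )`
    ∃ hw : (u₀ : H) + (lam - lam₀) • R (u₀ : H) ∈ dom,
      Γ₂ u = Γ₂ (⟨(u₀ : H) + (lam - lam₀) • R (u₀ : H), hw⟩ : dom) := by
  have hkey : (u : H) = (u₀ : H) + (lam - lam₀) • R (u₀ : H) := by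
    have hΓ : Γ₁ (u - u₀) = B (Γ₂ (u - u₀)) := by
      simp only [map_sub]
      have := hu.2; have := hu₀.2
      linear_combination (norm := abel) hu.2 - hu₀.2
    have h2 := hR.2 (u - u₀) hΓ
    have hT : T (u - u₀) - lam • ((u - u₀ : dom) : H) = (lam - lam₀) • (u₀ : H) := by
      simp only [map_sub, hu.1, hu₀.1, Submodule.coe_sub]
      module
    rw [hT, map_smul] at h2
    have : ((u - u₀ : dom) : H) = (u : H) - (u₀ : H) := rfl
    rw [this] at h2
    linear_combination (norm := abel) -h2
  have hw : (u₀ : H) + (lam - lam₀) • R (u₀ : H) ∈ dom := hkey ▸ u.2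
  exact ⟨hw, congrArg Γ₂ (Subtype.ext hkey)⟩
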